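/- arXiv:0909.0170 — 2 statements merged into one kernel-verified Lean document; each statement's English description precedes it below -/
import Mathlib

section
/- For the standard normal distribution, as x → ∞, h(x)ᵀ Γ_{F(x)}^{-1} h(x) · (1 - F(x)) → 2; that is, h(x)ᵀ Γ_{F(x)}^{-1} h(x) ~ 2(1-F(x))^{-1}. -/
/-!
With `G = 1 - F` and `μ = f / G` we have `Γ = [[G, f], [f, x f + G]]`, and inverting this
`2 × 2` matrix gives `hᵀ Γ⁻¹ h · G = (1 + x² - x μ) / (1 + x μ - μ²)`. Numerator and denominator
both cancel to leading order, so the Mills ratio is needed to third order: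
`x G / f = 1 - x⁻² + 3 x⁻⁴ + O(x⁻⁶)`, which makes the numerator `~ 2 x⁻²` and the denominator
`~ x⁻²`. This expansion follows from the two-sided tail bounds obtained by integrating
`φ (1 + 15 y⁻⁶) ≥ φ ≥ φ (1 - 105 y⁻⁸)` exactly over `(x, ∞)`: since `φ' = -y φ`, these are the
derivatives of `-φ R` for `R = y⁻¹ - y⁻³ + 3 y⁻⁵` and `R = y⁻¹ - y⁻³ + 3 y⁻⁵ - 15 y⁻⁷`.
-/

open MeasureTheory Matrix Filter Real Set ProbabilityTheory Topology

lemma dotProduct_inv_fin_two_mulVec (a b c d u v : ℝ) :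
    ![u, v] ⬝ᵥ (!![a, b; c, d]⁻¹ *ᵥ ![u, v]) =
      (d * u ^ 2 - (b + c) * u * v + a * v ^ 2) / (a * d - b * c) := by
  rw [inv_def, det_fin_two_of, adjugate_fin_two_of, Ring.inverse_eq_inv', smul_mulVec,
    dotProduct_smul]
  simp only [dotProduct, mulVec, of_apply, cons_val', cons_val_fin_one, Fin.sum_univ_two,
    cons_val_zero, cons_val_one, smul_eq_mul]
  ring

lemma tendsto_two_of_mills_ratio_expansion (μ : ℝ → ℝ)
    (h : Tendsto (fun x => x ^ 4 * (x / μ x - 1 + x⁻¹ ^ 2)) atTop (𝓝 3)) :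
    Tendsto (fun x => (1 + x ^ 2 - x * μ x) / (1 + x * μ x - μ x ^ 2)) atTop (𝓝 2) := by
  set q := fun x => x ^ 4 * (x / μ x - 1 + x⁻¹ ^ 2)
  set t := fun x : ℝ => x⁻¹ ^ 2
  set s := fun x => x / μ x
  have ht : Tendsto t atTop (𝓝 0) := by simpa [t] using (tendsto_inv_atTop_zero (𝕜 := ℝ)).pow 2
  have hs : Tendsto s atTop (𝓝 1) := by
    have hs_eq : ∀ᶠ x in atTop, 1 - t x + q x * t x ^ 2 = s x := by
      filter_upwards [eventually_ne_atTop 0] with x hx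
      simp only [q, t, s]
      field_simp
      ring
    refine Tendsto.congr' hs_eq ?_
    simpa using (tendsto_const_nhds.sub ht).add (h.mul (ht.pow 2))
  have hμ : ∀ᶠ x in atTop, μ x ≠ 0 := by
    filter_upwards [hs.eventually_ne one_ne_zero] with x hx hμ
    simp [s, hμ] at hx
  have hlim : Tendsto (fun x => s x * (q x - 1 + q x * t x) /
      ((q x * t x - 1) * (s x + 1) + q x)) atTop (𝓝 2) := by
    have h1 : Tendsto (fun _ : ℝ => (1 : ℝ)) atTop (𝓝 1) := tendsto_const_nhds
    have := (hs.mul ((h.sub h1).add (h.mul ht))).div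
      ((((h.mul ht).sub h1).mul (hs.add h1)).add h) (by norm_num)
    convert this using 2 <;> norm_num
  refine hlim.congr' ?_
  filter_upwards [eventually_ne_atTop 0, hμ] with x hx hμx
  -- numerator and denominator are `μ² t²` times those of `hlim`, since `s = 1 - t + q t²`
  have hc : μ x ^ 2 * t x ^ 2 ≠ 0 := by positivity
  rw [← mul_div_mul_left _ _ hc]
  congr 1 <;> · simp only [q, t, s]; field_simp; ring

lemma hasDerivAt_inv_pow (n : ℕ) {y : ℝ} (hy : y ≠ 0) :
    HasDerivAt (fun y => y⁻¹ ^ n) (-n * y⁻¹ ^ (n + 1)) y := by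
  refine ((hasDerivAt_inv hy).pow n).congr_deriv ?_
  rcases n with _ | n
  · simp
  · simp only [Nat.add_sub_cancel]
    push_cast
    ring

lemma MeasureTheory.IntegrableOn.mul_add_mul_inv_pow {f : ℝ → ℝ} {a : ℝ} (ha : 0 < a)
    (hf : IntegrableOn f (Ioi a)) (c k : ℝ) (n : ℕ) :
    IntegrableOn (fun y => f y * (c + k * y⁻¹ ^ n)) (Ioi a) := by
  refine Integrable.mul_bdd (c := |c| + |k| * a⁻¹ ^ n) hf
    (by fun_prop : Measurable fun y : ℝ => c + k * y⁻¹ ^ n).aestronglyMeasurable ?_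
  refine (ae_restrict_iff' measurableSet_Ioi).2 (Eventually.of_forall fun y hy => ?_)
  have hy0 : 0 < y := ha.trans hy
  calc ‖c + k * y⁻¹ ^ n‖ ≤ |c| + |k| * y⁻¹ ^ n := by
        simpa [abs_mul, abs_of_pos hy0] using norm_add_le c (k * y⁻¹ ^ n)
    _ ≤ |c| + |k| * a⁻¹ ^ n := by gcongr; exact hy.le

section StandardGaussian

local notation "φ" => gaussianPDFReal 0 1

lemma gaussianPDFReal_zero_one (x : ℝ) : φ x = exp (-x ^ 2 / 2) / √(2 * π) := by
  simp [gaussianPDFReal, div_eq_inv_mul]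

lemma hasDerivAt_gaussianPDFReal_zero_one (x : ℝ) : HasDerivAt φ (-x * φ x) x := by
  have h : HasDerivAt (fun x : ℝ => -x ^ 2 / 2) (-x) x := by
    refine ((hasDerivAt_pow 2 x).neg.div_const 2).congr_deriv ?_
    ring
  rw [funext gaussianPDFReal_zero_one]
  refine (h.exp.div_const (√(2 * π))).congr_deriv ?_
  ring

lemma tendsto_gaussianPDFReal_zero_one_atTop : Tendsto φ atTop (𝓝 0) := by
  rw [funext gaussianPDFReal_zero_one, ← zero_div (√(2 * π))]
  refine (tendsto_exp_atBot.comp ?_).div_const _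
  simpa [neg_div] using (tendsto_pow_atTop two_ne_zero).atTop_div_const (two_pos (α := ℝ))

lemma one_sub_integral_Iic_gaussianPDFReal (m : ℝ) {v : NNReal} (hv : v ≠ 0) (x : ℝ) :
    1 - ∫ y in Iic x, gaussianPDFReal m v y = ∫ y in Ioi x, gaussianPDFReal m v y := by
  rw [← integral_gaussianPDFReal_eq_one m hv, ← intervalIntegral.integral_Iic_add_Ioi
    (integrable_gaussianPDFReal m v).integrableOn (integrable_gaussianPDFReal m v).integrableOn]
  ring

lemma integral_Ioi_gaussianPDFReal_pos (m : ℝ) {v : NNReal} (hv : v ≠ 0) (x : ℝ) :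
    0 < ∫ y in Ioi x, gaussianPDFReal m v y := by
  rw [setIntegral_pos_iff_support_of_nonneg_ae
    (Eventually.of_forall fun y => gaussianPDFReal_nonneg m v y)
    (integrable_gaussianPDFReal m v).integrableOn]
  simp [Function.support_eq_univ fun y => (gaussianPDFReal_pos m v y hv).ne']

lemma integral_Ioi_gaussianPDFReal_mul {R g : ℝ → ℝ} {a : ℝ}
    (hR : ∀ y ∈ Ici a, HasDerivAt R (y * R y - g y) y)
    (hφR : Tendsto (fun y => φ y * R y) atTop (𝓝 0))
    (hg : IntegrableOn (fun y => φ y * g y) (Ioi a)) :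
    ∫ y in Ioi a, φ y * g y = φ a * R a := by
  have hderiv : ∀ y ∈ Ici a, HasDerivAt (fun y => -(φ y * R y)) (φ y * g y) y := fun y hy => by
    refine ((hasDerivAt_gaussianPDFReal_zero_one y).mul (hR y hy)).neg.congr_deriv ?_
    ring
  rw [integral_Ioi_of_hasDerivAt_of_tendsto' hderiv hg (by simpa using hφR.neg)]
  ring

lemma integral_Ioi_gaussianPDFReal_le {x : ℝ} (hx : 0 < x) :
    ∫ y in Ioi x, φ y ≤ φ x * (x⁻¹ - x⁻¹ ^ 3 + 3 * x⁻¹ ^ 5) := by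
  have hR : ∀ y ∈ Ici x, HasDerivAt (fun y => y⁻¹ - y⁻¹ ^ 3 + 3 * y⁻¹ ^ 5)
      (y * (y⁻¹ - y⁻¹ ^ 3 + 3 * y⁻¹ ^ 5) - (1 + 15 * y⁻¹ ^ 6)) y := fun y hy => by
    have hy : y ≠ 0 := (hx.trans_le hy).ne'
    refine (((hasDerivAt_inv hy).sub (hasDerivAt_inv_pow 3 hy)).add
      ((hasDerivAt_inv_pow 5 hy).const_mul 3)).congr_deriv ?_
    push_cast
    field_simp
    ring
  have hlim : Tendsto (fun y => φ y * (y⁻¹ - y⁻¹ ^ 3 + 3 * y⁻¹ ^ 5)) atTop (𝓝 0) := by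
    have h := tendsto_inv_atTop_zero (𝕜 := ℝ)
    simpa using tendsto_gaussianPDFReal_zero_one_atTop.mul
      ((h.sub (h.pow 3)).add ((h.pow 5).const_mul 3))
  have hφ := (integrable_gaussianPDFReal 0 1).integrableOn (s := Ioi x)
  have hg := hφ.mul_add_mul_inv_pow hx 1 15 6
  rw [← integral_Ioi_gaussianPDFReal_mul hR hlim hg]
  refine setIntegral_mono_on hφ hg measurableSet_Ioi fun y _ => ?_
  exact le_mul_of_one_le_right (gaussianPDFReal_nonneg 0 1 y)
    (le_add_of_nonneg_right (by positivity))

lemma le_integral_Ioi_gaussianPDFReal {x : ℝ} (hx : 0 < x) :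
    φ x * (x⁻¹ - x⁻¹ ^ 3 + 3 * x⁻¹ ^ 5 - 15 * x⁻¹ ^ 7) ≤ ∫ y in Ioi x, φ y := by
  have hR : ∀ y ∈ Ici x, HasDerivAt (fun y => y⁻¹ - y⁻¹ ^ 3 + 3 * y⁻¹ ^ 5 - 15 * y⁻¹ ^ 7)
      (y * (y⁻¹ - y⁻¹ ^ 3 + 3 * y⁻¹ ^ 5 - 15 * y⁻¹ ^ 7) - (1 - 105 * y⁻¹ ^ 8)) y := fun y hy => by
    have hy : y ≠ 0 := (hx.trans_le hy).ne'
    refine ((((hasDerivAt_inv hy).sub (hasDerivAt_inv_pow 3 hy)).add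
      ((hasDerivAt_inv_pow 5 hy).const_mul 3)).sub
      ((hasDerivAt_inv_pow 7 hy).const_mul 15)).congr_deriv ?_
    push_cast
    field_simp
    ring
  have hlim : Tendsto (fun y => φ y * (y⁻¹ - y⁻¹ ^ 3 + 3 * y⁻¹ ^ 5 - 15 * y⁻¹ ^ 7)) atTop
      (𝓝 0) := by
    have h := tendsto_inv_atTop_zero (𝕜 := ℝ)
    simpa using tendsto_gaussianPDFReal_zero_one_atTop.mul
      (((h.sub (h.pow 3)).add ((h.pow 5).const_mul 3)).sub ((h.pow 7).const_mul 15))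
  have hφ := (integrable_gaussianPDFReal 0 1).integrableOn (s := Ioi x)
  have hg : IntegrableOn (fun y => φ y * (1 - 105 * y⁻¹ ^ 8)) (Ioi x) := by
    simpa [sub_eq_add_neg] using hφ.mul_add_mul_inv_pow hx 1 (-105) 8
  rw [← integral_Ioi_gaussianPDFReal_mul hR hlim hg]
  refine setIntegral_mono_on hg hφ measurableSet_Ioi fun y _ => ?_
  exact mul_le_of_le_one_right (gaussianPDFReal_nonneg 0 1 y) (sub_le_self _ (by positivity))

lemma tendsto_mills_ratio_expansion :
    Tendsto (fun x => x ^ 4 * (x * (∫ y in Ioi x, φ y) / φ x - 1 + x⁻¹ ^ 2)) atTop (𝓝 3) := by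
  have h := tendsto_inv_atTop_zero (𝕜 := ℝ)
  refine tendsto_of_tendsto_of_tendsto_of_le_of_le' (g := fun x => 3 - 15 * x⁻¹ ^ 2)
    (by simpa using ((h.pow 2).const_mul 15).const_sub 3) tendsto_const_nhds ?_ ?_
  · filter_upwards [eventually_gt_atTop 0] with x hx
    have hφ := gaussianPDFReal_pos 0 1 x one_ne_zero
    calc 3 - 15 * x⁻¹ ^ 2
        = x ^ 4 * (x * (x⁻¹ - x⁻¹ ^ 3 + 3 * x⁻¹ ^ 5 - 15 * x⁻¹ ^ 7) - 1 + x⁻¹ ^ 2) := by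
          field_simp; ring
      _ ≤ _ := by
          gcongr
          rw [le_div_iff₀ hφ, mul_assoc, mul_comm _ (φ x)]
          gcongr
          exact le_integral_Ioi_gaussianPDFReal hx
  · filter_upwards [eventually_gt_atTop 0] with x hx
    have hφ := gaussianPDFReal_pos 0 1 x one_ne_zero
    calc _ ≤ x ^ 4 * (x * (x⁻¹ - x⁻¹ ^ 3 + 3 * x⁻¹ ^ 5) - 1 + x⁻¹ ^ 2) := by
          gcongr
          rw [div_le_iff₀ hφ, mul_assoc, mul_comm _ (φ x)]
          gcongr
          exact integral_Ioi_gaussianPDFReal_le hx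
      _ = 3 := by field_simp; ring

end StandardGaussian

/-- For the standard normal distribution, as `x → ∞`,
`h(x)ᵀ Γ_{F(x)}⁻¹ h(x) · (1 - F(x)) → 2`; that is,
`h(x)ᵀ Γ_{F(x)}⁻¹ h(x) ~ 2(1-F(x))⁻¹`. -/
theorem normal_quadratic_form_asymptotics (f F μ : ℝ → ℝ) (h : ℝ → Fin 2 → ℝ)
    (Γ : ℝ → Matrix (Fin 2) (Fin 2) ℝ)
    (hf : ∀ x, f x = Real.exp (-x ^ 2 / 2) / Real.sqrt (2 * Real.pi))
    (hF : ∀ x, F x = ∫ y in Set.Iic x, f y)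
    (hμ : ∀ x, μ x = f x / (1 - F x))
    (hh : ∀ x, h x = ![1, x])
    (hΓ : ∀ x, Γ x = (1 - F x) • !![1, μ x; μ x, x * μ x + 1]) :
    Tendsto (fun x => (h x ⬝ᵥ ((Γ x)⁻¹ *ᵥ h x)) * (1 - F x)) atTop (nhds 2) := by
  have hφ : f = gaussianPDFReal 0 1 := funext fun x => by rw [hf, gaussianPDFReal_zero_one]
  have htail : ∀ x, 1 - F x = ∫ y in Ioi x, gaussianPDFReal 0 1 y := fun x => by
    rw [hF, hφ, one_sub_integral_Iic_gaussianPDFReal 0 one_ne_zero]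
  have hmills : Tendsto (fun x => x ^ 4 * (x / μ x - 1 + x⁻¹ ^ 2)) atTop (𝓝 3) := by
    refine tendsto_mills_ratio_expansion.congr fun x => ?_
    rw [hμ, htail, hφ, div_div_eq_mul_div]
  refine (tendsto_two_of_mills_ratio_expansion μ hmills).congr fun x => ?_
  have hG : 1 - F x ≠ 0 := (htail x ▸ integral_Ioi_gaussianPDFReal_pos 0 one_ne_zero x).ne'
  rw [hΓ, hh]
  simp only [smul_of, smul_cons, smul_eq_mul, Matrix.smul_empty]
  rw [dotProduct_inv_fin_two_mulVec]
  field_simp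
  ring
end

section
/- For Student's t-distribution with k ≥ 1 degrees of freedom, 1 - F(x) ~ (d_k/k) x^{-k} as x → ∞, where d_k = Γ((k+1)/2) k^{k/2} / (√π Γ(k/2)). -/
/-!
L'Hôpital's rule gives `x^k ∫_x^∞ f ~ x^(k+1) f(x) / k` for a continuous integrable `f`, and
for the t-density `x^(k+1) f(x) → c k^((k+1)/2) = d_k`. What remains is the normalisation
`∫ f = 1`, i.e. `I((k+1)/2) Γ((k+1)/2) = √π Γ(k/2)` for `I(q) = ∫ (1 + x²)^(-q)`. Integrating
the derivative of `x (1 + x²)^(-q)` over `ℝ` gives `2q I(q+1) = (2q-1) I(q)`, which matches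
`Γ(q+1) = q Γ(q)`; the base cases are `I(1) = π` and `I(3/2) = 2`.
-/

open MeasureTheory Filter Real Set Topology

theorem hasDerivAt_integral_Ioi {f : ℝ → ℝ} {a x : ℝ} (hf : Continuous f)
    (hfi : IntegrableOn f (Ioi a)) (hx : a < x) :
    HasDerivAt (fun y => ∫ t in Ioi y, f t) (-f x) x := by
  have hsplit : ∀ y ∈ Ioi a,
      ∫ t in Ioi y, f t = (∫ t in Ioi a, f t) - ∫ t in a..y, f t := by
    intro y hy
    rw [eq_sub_iff_add_eq', intervalIntegral.integral_interval_add_Ioi hfi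
      (hfi.mono_set (Ioi_subset_Ioi (le_of_lt hy)))]
  refine HasDerivAt.congr_of_eventuallyEq ?_ (eventually_of_mem (Ioi_mem_nhds hx) hsplit)
  exact (hf.integral_hasStrictDerivAt a x).hasDerivAt.const_sub _

theorem tendsto_rpow_mul_integral_Ioi_of_tendsto {f : ℝ → ℝ} {a k L : ℝ} (hk : 0 < k)
    (hf : Continuous f) (hfi : IntegrableOn f (Ioi a))
    (hlim : Tendsto (fun x => x ^ (k + 1) * f x) atTop (𝓝 L)) :
    Tendsto (fun x => x ^ k * ∫ t in Ioi x, f t) atTop (𝓝 (L / k)) := by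
  have hpos : ∀ᶠ x : ℝ in atTop, 0 < x := eventually_gt_atTop 0
  have hdiv : Tendsto (fun x => -f x / (-k * x ^ (-k - 1))) atTop (𝓝 (L / k)) := by
    refine (hlim.div_const k).congr' ?_
    filter_upwards [hpos] with x hx
    rw [neg_mul, neg_div_neg_eq, rpow_sub hx, rpow_neg hx.le, rpow_one, rpow_add hx, rpow_one]
    field_simp
  have hl := HasDerivAt.lhopital_zero_atTop
    (f := fun x => ∫ t in Ioi x, f t) (g := fun x : ℝ => x ^ (-k))
    (eventually_gt_atTop a |>.mono fun x hx => hasDerivAt_integral_Ioi hf hfi hx)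
    (hpos.mono fun x hx => hasDerivAt_rpow_const (Or.inl hx.ne'))
    (hpos.mono fun x hx => mul_ne_zero (neg_ne_zero.2 hk.ne') (rpow_pos_of_pos hx _).ne')
    (tendsto_integral_Ioi_zero tendsto_id) (tendsto_rpow_neg_atTop hk) hdiv
  refine hl.congr' ?_
  filter_upwards [hpos] with x hx
  rw [rpow_neg hx.le, div_inv_eq_mul, mul_comm]

theorem integrable_one_add_sq_rpow_neg {q : ℝ} (hq : 1 / 2 < q) :
    Integrable fun x : ℝ => (1 + x ^ 2) ^ (-q) := by
  have h := integrable_rpow_neg_one_add_norm_sq (E := ℝ) (μ := volume) (r := 2 * q)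
    (by rw [Module.finrank_self, Nat.cast_one]; linarith)
  simpa [sq_abs, show -(2 * q) / 2 = -q by ring] using h

theorem hasDerivAt_mul_one_add_sq_rpow_neg (q x : ℝ) :
    HasDerivAt (fun x : ℝ => x * (1 + x ^ 2) ^ (-q))
      ((1 - 2 * q) * (1 + x ^ 2) ^ (-q) + 2 * q * (1 + x ^ 2) ^ (-(q + 1))) x := by
  have hpos : 0 < 1 + x ^ 2 := by positivity
  have hrpow : HasDerivAt (fun x : ℝ => (1 + x ^ 2) ^ (-q))
      (-(2 * x * q * (1 + x ^ 2) ^ (-(q + 1)))) x := by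
    have := ((hasDerivAt_pow 2 x).const_add 1).rpow_const (p := -q) (Or.inl hpos.ne')
    simpa [← neg_add'] using this
  refine ((hasDerivAt_id x).fun_mul hrpow).congr_deriv ?_
  rw [show -q = 1 + -(q + 1) by ring, rpow_add hpos, rpow_one]
  simp only [id]
  ring

theorem tendsto_mul_one_add_sq_rpow_neg_cocompact {q : ℝ} (hq : 1 / 2 < q) :
    Tendsto (fun x : ℝ => x * (1 + x ^ 2) ^ (-q)) (cocompact ℝ) (𝓝 0) := by
  have hdecay := (tendsto_rpow_neg_atTop (y := 2 * q - 1) (by linarith)).comp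
    (tendsto_norm_cocompact_atTop (E := ℝ))
  refine squeeze_zero_norm' ?_ (by simpa [Function.comp_def] using hdecay)
  filter_upwards [(isCompact_singleton (x := (0 : ℝ))).compl_mem_cocompact] with x hx
  have hx' : 0 < |x| := abs_pos.2 hx
  rw [norm_mul, norm_of_nonneg (by positivity : 0 ≤ (1 + x ^ 2) ^ (-q)), norm_eq_abs,
    sub_eq_add_neg, rpow_add hx', rpow_one, ← sq_abs, show -(2 * q) = 2 * -q by ring,
    rpow_mul hx'.le]
  exact mul_le_mul_of_nonneg_left (rpow_le_rpow_of_nonpos (by positivity)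
    (by norm_cast; linarith) (by linarith)) hx'.le

theorem tendsto_rpow_mul_one_add_sq_div_rpow_neg {ν : ℝ} (hν : 0 < ν) (q : ℝ) :
    Tendsto (fun x : ℝ => x ^ q * (1 + x ^ 2 / ν) ^ (-(q / 2))) atTop (𝓝 (ν ^ (q / 2))) := by
  have hlim : Tendsto (fun x : ℝ => (x⁻¹ ^ 2 + ν⁻¹) ^ (-(q / 2))) atTop
      (𝓝 ((ν⁻¹) ^ (-(q / 2)))) := by
    refine Tendsto.rpow_const ?_ (Or.inl (inv_pos.2 hν).ne')
    simpa using ((tendsto_inv_atTop_zero (𝕜 := ℝ)).pow 2).add_const ν⁻¹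
  rw [inv_rpow hν.le, ← rpow_neg hν.le, neg_neg] at hlim
  refine hlim.congr' ?_
  filter_upwards [eventually_gt_atTop 0] with x hx
  have hxq : x ^ q = ((x ^ 2)⁻¹) ^ (-(q / 2)) := by
    rw [inv_rpow (by positivity), ← rpow_neg (by positivity), neg_neg, ← rpow_natCast,
      ← rpow_mul hx.le]
    ring_nf
  rw [hxq, ← mul_rpow (by positivity) (by positivity)]
  congr 1
  field_simp

theorem integral_one_add_sq_rpow_neg_add_one {q : ℝ} (hq : 1 / 2 < q) :
    2 * q * ∫ x : ℝ, (1 + x ^ 2) ^ (-(q + 1)) = (2 * q - 1) * ∫ x : ℝ, (1 + x ^ 2) ^ (-q) := by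
  have hI := integrable_one_add_sq_rpow_neg hq
  have hI' := integrable_one_add_sq_rpow_neg (q := q + 1) (by linarith)
  have hlim := tendsto_mul_one_add_sq_rpow_neg_cocompact hq
  rw [cocompact_eq_atBot_atTop, tendsto_sup] at hlim
  have h := integral_of_hasDerivAt_of_tendsto (hasDerivAt_mul_one_add_sq_rpow_neg q)
    ((hI.const_mul _).add (hI'.const_mul _)) hlim.1 hlim.2
  rw [integral_add (hI.const_mul _) (hI'.const_mul _), integral_const_mul,
    integral_const_mul] at h
  linarith

theorem integral_one_add_sq_rpow_neg_three_halves :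
    ∫ x : ℝ, (1 + x ^ 2) ^ (-(3 / 2 : ℝ)) = 2 := by
  have htop : Tendsto (fun x : ℝ => x * (1 + x ^ 2) ^ (-(1 / 2 : ℝ))) atTop (𝓝 1) := by
    simpa using tendsto_rpow_mul_one_add_sq_div_rpow_neg one_pos 1
  have hbot : Tendsto (fun x : ℝ => x * (1 + x ^ 2) ^ (-(1 / 2 : ℝ))) atBot (𝓝 (-1)) := by
    simpa [Function.comp_def] using (htop.comp tendsto_neg_atBot_atTop).neg
  have hderiv : ∀ x : ℝ, HasDerivAt (fun x : ℝ => x * (1 + x ^ 2) ^ (-(1 / 2 : ℝ)))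
      ((1 + x ^ 2) ^ (-(3 / 2 : ℝ))) x := fun x => by
    convert hasDerivAt_mul_one_add_sq_rpow_neg (1 / 2) x using 1
    norm_num
  rw [integral_of_hasDerivAt_of_tendsto hderiv
    (integrable_one_add_sq_rpow_neg (q := 3 / 2) (by norm_num)) hbot htop]
  norm_num

theorem integral_one_add_sq_rpow_neg_mul_Gamma :
    ∀ k : ℕ, 1 ≤ k → (∫ x : ℝ, (1 + x ^ 2) ^ (-(((k : ℝ) + 1) / 2))) * Gamma (((k : ℝ) + 1) / 2)
      = √π * Gamma ((k : ℝ) / 2)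
  | 1, _ => by
    norm_num [rpow_neg_one, integral_univ_inv_one_add_sq, Gamma_one_half_eq,
      mul_self_sqrt pi_pos.le]
  | 2, _ => by
    have h : Gamma (3 / 2) = √π / 2 := by
      rw [show (3 / 2 : ℝ) = 1 / 2 + 1 by norm_num, Gamma_add_one (by norm_num),
        Gamma_one_half_eq]
      ring
    norm_num [integral_one_add_sq_rpow_neg_three_halves, h, mul_div_cancel₀]
  | k + 3, _ => by
    have ih := integral_one_add_sq_rpow_neg_mul_Gamma (k + 1) (by omega)
    have hrec := integral_one_add_sq_rpow_neg_add_one (q := ((k : ℝ) + 2) / 2)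
      (by linarith [(k.cast_nonneg : (0 : ℝ) ≤ k)])
    push_cast at ih ⊢
    rw [show ((k : ℝ) + 3 + 1) / 2 = ((k : ℝ) + 2) / 2 + 1 by ring,
      show ((k : ℝ) + 3) / 2 = ((k : ℝ) + 1) / 2 + 1 by ring,
      Gamma_add_one (by positivity), Gamma_add_one (by positivity)]
    rw [show ((k : ℝ) + 1 + 1) / 2 = ((k : ℝ) + 2) / 2 by ring] at ih
    linear_combination (Gamma (((k : ℝ) + 2) / 2) / 2) * hrec + (((k : ℝ) + 1) / 2) * ih

theorem integrable_one_add_sq_div_rpow_neg {ν q : ℝ} (hν : 0 < ν) (hq : 1 / 2 < q) :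
    Integrable fun x : ℝ => (1 + x ^ 2 / ν) ^ (-q) := by
  have h := (integrable_one_add_sq_rpow_neg hq).comp_div (sqrt_pos.2 hν).ne'
  simpa [div_pow, sq_sqrt hν.le] using h

theorem integral_one_add_sq_div_rpow_neg {ν : ℝ} (hν : 0 < ν) (p : ℝ) :
    ∫ x : ℝ, (1 + x ^ 2 / ν) ^ (-p) = √ν * ∫ x : ℝ, (1 + x ^ 2) ^ (-p) := by
  have h := Measure.integral_comp_div (fun x : ℝ => (1 + x ^ 2) ^ (-p)) √ν
  simpa [div_pow, sq_sqrt hν.le, abs_of_pos (sqrt_pos.2 hν)] using h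

theorem integral_one_add_sq_div_rpow_neg_succ_div_two {k : ℕ} (hk : 1 ≤ k) :
    ∫ x : ℝ, (1 + x ^ 2 / k) ^ (-(((k : ℝ) + 1) / 2))
      = √(π * k) * Gamma ((k : ℝ) / 2) / Gamma (((k : ℝ) + 1) / 2) := by
  have hk0 : (0 : ℝ) < k := by positivity
  have hΓ : 0 < Gamma (((k : ℝ) + 1) / 2) := Gamma_pos_of_pos (by positivity)
  rw [integral_one_add_sq_div_rpow_neg hk0, eq_div_iff hΓ.ne', mul_assoc,
    integral_one_add_sq_rpow_neg_mul_Gamma k hk, sqrt_mul pi_pos.le]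
  ring

/-- For Student's t-distribution with `k ≥ 1` degrees of freedom,
`1 - F(x) ~ (d_k/k) x^{-k}` as `x → ∞`, where
`d_k = Γ((k+1)/2) k^{k/2} / (√π Γ(k/2))`, in the sense that
`x^k (1 - F(x)) → d_k / k`. -/
theorem student_t_tail (k : ℕ) (hk : 1 ≤ k) (f F : ℝ → ℝ) (d : ℝ)
    (hf : ∀ x, f x = (1 / Real.sqrt (Real.pi * k)) *
      (Real.Gamma ((k + 1) / 2) / Real.Gamma (k / 2)) *
      (1 + x ^ 2 / k) ^ (-(((k : ℝ) + 1) / 2)))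
    (hF : ∀ x, F x = ∫ y in Set.Iic x, f y)
    (hd : d = Real.Gamma ((k + 1) / 2) * (k : ℝ) ^ ((k : ℝ) / 2) /
      (Real.sqrt Real.pi * Real.Gamma (k / 2))) :
    Tendsto (fun x => x ^ k * (1 - F x)) atTop (nhds (d / k)) := by
  have hk0 : (0 : ℝ) < k := by positivity
  set c := 1 / √(π * k) * (Gamma ((k + 1) / 2) / Gamma (k / 2)) with hc
  have hf' : f = fun x => c * (1 + x ^ 2 / k) ^ (-(((k : ℝ) + 1) / 2)) := funext hf
  have hfi : Integrable f := by
    rw [hf']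
    exact (integrable_one_add_sq_div_rpow_neg hk0 (by linarith)).const_mul c
  have hfc : Continuous f := by
    rw [hf']
    exact continuous_const.mul <| (by fun_prop : Continuous fun x : ℝ => 1 + x ^ 2 / k).rpow_const
      fun x => Or.inl (by positivity)
  have hnorm : ∫ x, f x = 1 := by
    rw [hf', integral_const_mul, integral_one_add_sq_div_rpow_neg_succ_div_two hk, hc]
    have hΓ : 0 < Gamma ((k : ℝ) / 2) := Gamma_pos_of_pos (by positivity)
    have hΓ' : 0 < Gamma (((k : ℝ) + 1) / 2) := Gamma_pos_of_pos (by positivity)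
    have hs : 0 < √(π * k) := sqrt_pos.2 (by positivity)
    field_simp
  have htail : ∀ x, 1 - F x = ∫ y in Ioi x, f y := fun x => by
    rw [hF, ← hnorm, ← intervalIntegral.integral_Iic_add_Ioi hfi.integrableOn hfi.integrableOn]
    ring
  have hcd : c * (k : ℝ) ^ (((k : ℝ) + 1) / 2) = d := by
    rw [hd, hc, add_div, rpow_add hk0, ← sqrt_eq_rpow, sqrt_mul pi_pos.le]
    have hsk : 0 < √(k : ℝ) := sqrt_pos.2 hk0
    field_simp
  have hlim : Tendsto (fun x => x ^ ((k : ℝ) + 1) * f x) atTop (𝓝 d) := by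
    rw [← hcd]
    refine ((tendsto_rpow_mul_one_add_sq_div_rpow_neg hk0 _).const_mul c).congr fun x => ?_
    rw [hf x]
    ring
  refine (tendsto_rpow_mul_integral_Ioi_of_tendsto (a := 0) hk0 hfc hfi.integrableOn hlim).congr
    fun x => ?_
  rw [rpow_natCast, htail]
end
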